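/- [Necessary condition for a target error probability, sign-preserving adder] Let Q̃ ≥ 1 be an integer, p ∈ [0,1], and η ≥ 0. Let c : ℤ → ℝ satisfy c(z) ≥ 0 for all z, c(z) = 0 for |z| > Q̃, and Σ_{z=−Q̃}^{Q̃} c(z) = 1. Set c⁻ = Σ_{z=−Q̃}^{−1} c(z) + c(0)/2 and c⁺ = c(0)/2 + Σ_{z=1}^{Q̃} c(z), and define C : {−Q̃,…,Q̃} → ℝ by C(z) = (1−p)·c(z) + (p/Q̃)·(c⁻ − c(z)) for z < 0, C(0) = (1−p)·c(0) + (p/Q̃)·(1 − c(0)), and C(z) = (1−p)·c(z) + (p/Q̃)·(c⁺ − c(z)) for z > 0. If Σ_{z=−Q̃}^{−1} C(z) + C(0)/2 ≤ η, then p ≤ 2·Q̃·η. -/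

import Mathlib

open Finset

/-- The paper's `c⁻`: mass of the negative messages, with the tie `0` counted half. -/
noncomputable def negMass (Q : ℤ) (f : ℤ → ℝ) : ℝ :=
  ∑ z ∈ Icc (-Q) (-1), f z + f 0 / 2

lemma Int.card_Icc_neg_neg_one {n : ℤ} (hn : 0 ≤ n) : ((Icc (-n) (-1)).card : ℤ) = n := by
  rw [Int.card_Icc, show -1 + 1 - -n = n by ring, Int.toNat_of_nonneg hn]

lemma Finset.sum_mul_add_mul_sub {ι R : Type*} [CommRing R] (s : Finset ι) (f : ι → R)
    (a b m : R) :
    ∑ z ∈ s, (a * f z + b * (m - f z)) = a * ∑ z ∈ s, f z + b * (s.card * m - ∑ z ∈ s, f z) := by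
  simp only [sum_add_distrib, ← mul_sum, sum_sub_distrib, sum_const, nsmul_eq_mul]

lemma negMass_nonneg (Q : ℤ) {f : ℤ → ℝ} (hf : ∀ z, 0 ≤ f z) : 0 ≤ negMass Q f :=
  add_nonneg (sum_nonneg fun z _ => hf z) (div_nonneg (hf 0) zero_le_two)

lemma negMass_noisy {Q : ℤ} (hQ : 0 < Q) (p : ℝ) {c C : ℤ → ℝ}
    (hCneg : ∀ z : ℤ, -Q ≤ z → z < 0 → C z = (1 - p) * c z + (p / Q) * (negMass Q c - c z))
    (hC0 : C 0 = (1 - p) * c 0 + (p / Q) * (1 - c 0)) :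
    negMass Q C = p / (2 * Q) + (1 - p / Q) * negMass Q c := by
  have hQR : (Q : ℝ) ≠ 0 := by exact_mod_cast hQ.ne'
  have hcard : ((Icc (-Q) (-1)).card : ℝ) = Q := by
    exact_mod_cast Int.card_Icc_neg_neg_one hQ.le
  have hsum : ∑ z ∈ Icc (-Q) (-1), C z
      = ∑ z ∈ Icc (-Q) (-1), ((1 - p) * c z + (p / Q) * (negMass Q c - c z)) :=
    sum_congr rfl fun z hz => by
      rw [mem_Icc] at hz
      exact hCneg z hz.1 (by omega)
  rw [negMass, hsum, sum_mul_add_mul_sub, hcard, hC0, negMass]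
  field_simp
  ring

theorem stmt12_general (Qt : ℤ) (hQt : 1 ≤ Qt) (p : ℝ) (hp1 : p ≤ 1)
    (η : ℝ)
    (c : ℤ → ℝ) (hc_nonneg : ∀ z, 0 ≤ c z)
    (C : ℤ → ℝ)
    (hCneg : ∀ z : ℤ, -Qt ≤ z → z < 0 →
      C z = (1 - p) * c z +
        (p / (Qt : ℝ)) * ((∑ u ∈ Finset.Icc (-Qt) (-1), c u + c 0 / 2) - c z))
    (hC0 : C 0 = (1 - p) * c 0 + (p / (Qt : ℝ)) * (1 - c 0))
    (htarget : ∑ z ∈ Finset.Icc (-Qt) (-1), C z + C 0 / 2 ≤ η) :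
    p ≤ 2 * (Qt : ℝ) * η := by
  have hQ : (1 : ℝ) ≤ Qt := by exact_mod_cast hQt
  have hmass := negMass_noisy (by omega) p hCneg hC0
  have hweight : 0 ≤ (1 - p / Qt) * negMass Qt c :=
    mul_nonneg (by rw [sub_nonneg, div_le_one (by linarith)]; linarith)
      (negMass_nonneg Qt hc_nonneg)
  have hbound : p / (2 * Qt) ≤ η := by
    have htarget' : negMass Qt C ≤ η := htarget
    linarith
  rw [div_le_iff₀ (by positivity)] at hbound
  linarith

/-- Necessary condition `p ≤ 2·Q̃·η` to achieve a target error probability `η`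
with a sign-preserving bitwise-XORed noisy adder. -/
theorem stmt12 (Qt : ℤ) (hQt : 1 ≤ Qt) (p : ℝ) (hp0 : 0 ≤ p) (hp1 : p ≤ 1)
    (η : ℝ) (hη : 0 ≤ η)
    (c : ℤ → ℝ) (hc_nonneg : ∀ z, 0 ≤ c z)
    (hc_supp : ∀ z : ℤ, Qt < |z| → c z = 0)
    (hc_sum : ∑ z ∈ Finset.Icc (-Qt) Qt, c z = 1)
    (C : ℤ → ℝ)
    (hCneg : ∀ z : ℤ, -Qt ≤ z → z < 0 →
      C z = (1 - p) * c z +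
        (p / (Qt : ℝ)) * ((∑ u ∈ Finset.Icc (-Qt) (-1), c u + c 0 / 2) - c z))
    (hC0 : C 0 = (1 - p) * c 0 + (p / (Qt : ℝ)) * (1 - c 0))
    (hCpos : ∀ z : ℤ, 0 < z → z ≤ Qt →
      C z = (1 - p) * c z +
        (p / (Qt : ℝ)) * ((c 0 / 2 + ∑ u ∈ Finset.Icc 1 Qt, c u) - c z))
    (htarget : ∑ z ∈ Finset.Icc (-Qt) (-1), C z + C 0 / 2 ≤ η) :
    p ≤ 2 * (Qt : ℝ) * η :=
  stmt12_general Qt hQt p hp1 η c hc_nonneg C hCneg hC0 htarget
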